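/- Let (W,S) be a Coxeter system, and suppose w ∈ W contains y ∈ W as a factor, with l(w) = l(y) + 1 (so w = sy or w = ys for some s ∈ S). If there exists a proper mask σ on some reduced expression of y with (# zero-defects of σ) ≥ (# plain-zeros of σ), then there exists a proper mask σ' on some reduced expression of w with (# zero-defects of σ') ≥ (# plain-zeros of σ'). Hence if y is not Deodhar then w is not Deodhar. -/

import Mathlib

open List

namespace Paper

variable {B W : Type*} [Group W]

/-- The product of the subword of `ω` selected by the mask `σ`. -/
def maskProd (M : CoxeterMatrix B) (cs : CoxeterSystem M W)
    (ω : List B) (σ : List Bool) : W :=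
  cs.wordProd (((ω.zip σ).filter (fun p => p.2)).map (fun p => p.1))

/-- The product of the initial subword selected by the first `j` entries of the mask. -/
def maskProdTake (M : CoxeterMatrix B) (cs : CoxeterSystem M W)
    (ω : List B) (σ : List Bool) (j : ℕ) : W :=
  maskProd M cs (ω.take j) (σ.take j)

/-- Position `j` (zero-based; the paper's position `j+1`) is a defect of the reduced
expression `ω` with respect to the mask `σ`. -/
def IsDefect (M : CoxeterMatrix B) (cs : CoxeterSystem M W)
    (ω : List B) (σ : List Bool) (j : Fin ω.length) : Prop :=
  cs.length (maskProdTake M cs ω σ j * cs.simple (ω.get j)) <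
    cs.length (maskProdTake M cs ω σ j)

open Classical in
/-- The number of zero-defects of the mask `σ` on `ω`. -/
noncomputable def zeroDefects (M : CoxeterMatrix B) (cs : CoxeterSystem M W)
    (ω : List B) (σ : List Bool) : ℕ :=
  (Finset.univ.filter (fun j : Fin ω.length =>
    σ.getD (j : ℕ) true = false ∧ IsDefect M cs ω σ j)).card

open Classical in
/-- The number of plain-zeros of the mask `σ` on `ω`. -/
noncomputable def plainZeros (M : CoxeterMatrix B) (cs : CoxeterSystem M W)
    (ω : List B) (σ : List Bool) : ℕ :=
  (Finset.univ.filter (fun j : Fin ω.length =>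
    σ.getD (j : ℕ) true = false ∧ ¬ IsDefect M cs ω σ j)).card

/-- A mask is proper if it has the right length and contains at least one zero. -/
def ProperMask (ω : List B) (σ : List Bool) : Prop :=
  σ.length = ω.length ∧ false ∈ σ

/-- A reduced expression `ω` is Deodhar if every proper mask on it satisfies
(# zero-defects) < (# plain-zeros). -/
def IsDeodharExpr (M : CoxeterMatrix B) (cs : CoxeterSystem M W) (ω : List B) : Prop :=
  ∀ σ : List Bool, ProperMask ω σ → zeroDefects M cs ω σ < plainZeros M cs ω σ

/-- An element is Deodhar if every (equivalently, some) reduced expression for it is Deodhar. -/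
def IsDeodharElt (M : CoxeterMatrix B) (cs : CoxeterSystem M W) (w : W) : Prop :=
  ∀ ω : List B, cs.IsReduced ω → cs.wordProd ω = w → IsDeodharExpr M cs ω

/-- `w` contains `y` as a factor: `w = a·y·b` with `l(w) = l(a) + l(y) + l(b)`. -/
def ContainsFactor {B W : Type*} [Group W] (M : CoxeterMatrix B)
    (cs : CoxeterSystem M W) (w y : W) : Prop :=
  ∃ a b : W, w = a * y * b ∧ cs.length w = cs.length a + cs.length y + cs.length b


namespace SE

variable (M : CoxeterMatrix B) (cs : CoxeterSystem M W)

local prefix:100 "ss" => cs.simple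
local prefix:100 "ℓℓ" => cs.length
local prefix:100 "ππ" => cs.wordProd

open Classical in
/-- auxiliary function for the sign representation -/
noncomputable def etaFun (i : B) : W × ℤˣ → W × ℤˣ :=
  fun p => (ss i * p.1 * ss i, if p.1 = ss i then -p.2 else p.2)

lemma sandwich (i : B) (x : W) : ss i * (ss i * x * ss i) * ss i = x := by
  simp [← mul_assoc, cs.simple_mul_simple_self i, cs.simple_mul_simple_cancel_right]

lemma etaFun_invol (i : B) : Function.Involutive (etaFun M cs i) := by
  intro p
  by_cases hp : p.1 = ss i
  · simp only [etaFun, hp, if_pos rfl, cs.simple_mul_simple_cancel_right,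
      cs.simple_mul_simple_self, one_mul]
    simp [hp, Prod.ext_iff]
  · have h2 : ¬(ss i * p.1 * ss i = ss i) := by
      intro h
      apply hp
      have := congrArg (fun x => ss i * x * ss i) h
      rw [sandwich] at this
      rw [this]
      simp [← mul_assoc, cs.simple_mul_simple_self i]
    simp only [etaFun, if_neg hp, if_neg h2, sandwich]
    simp [h2]

/-- the sign permutation attached to a simple reflection -/
noncomputable def eta (i : B) : Equiv.Perm (W × ℤˣ) := (etaFun_invol M cs i).toPerm

lemma eta_apply (i : B) (p : W × ℤˣ) : eta M cs i p = etaFun M cs i p := rfl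

open Classical in
lemma eta_liftable : M.IsLiftable (eta M cs) := by
  intro i i'
  set p := ss i with hp
  set q := ss i' with hq
  have hqp_pq : (q*p) * (p*q) = 1 := by
    have : q * (p * (p * q)) = q * q := by rw [cs.simple_mul_simple_cancel_left]
    rw [show (q*p)*(p*q) = q * (p * (p * q)) by group, this, cs.simple_mul_simple_self]
  have hpq_qp : (p*q) * (q*p) = 1 := by
    have : p * (q * (q * p)) = p * p := by rw [cs.simple_mul_simple_cancel_left]
    rw [show (p*q)*(q*p) = p * (q * (q * p)) by group, this, cs.simple_mul_simple_self]
  have hconj : ∀ (t X : W), ((p*q) * t * (q*p) = X) ↔ (t = (q*p) * X * (p*q)) := by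
    intro t X
    constructor
    · rintro rfl
      rw [show (q*p) * ((p*q)*t*(q*p)) * (p*q) = ((q*p)*(p*q))*t*((q*p)*(p*q)) by group,
        hqp_pq, one_mul, mul_one]
    · rintro rfl
      rw [show (p*q) * ((q*p)*X*(p*q)) * (q*p) = ((p*q)*(q*p))*X*((p*q)*(q*p)) by group,
        hpq_qp, one_mul, mul_one]
  have hshift : ∀ a : ℕ, (q*p) * ((q*p)^a * q) * (p*q) = (q*p)^(a+2) * q := by
    intro a
    calc (q*p) * ((q*p)^a * q) * (p*q)
        = ((q*p) * (q*p)^a) * ((q*p)*q) := by group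
      _ = (q*p)^(a+1) * ((q*p)*q) := by rw [← pow_succ']
      _ = ((q*p)^(a+1) * (q*p)) * q := by group
      _ = (q*p)^(a+2) * q := by rw [← pow_succ]
  -- the key induction
  have key : ∀ k : ℕ, ∀ t : W, ∀ ε : ℤˣ,
      ((eta M cs i * eta M cs i') ^ k) (t, ε) =
      ((p*q)^k * t * (q*p)^k,
        (∏ a ∈ Finset.range (2*k), (if t = (q*p)^a * q then (-1:ℤˣ) else 1)) * ε) := by
    intro k
    induction k with
    | zero => intro t ε; simp
    | succ k ih =>
      intro t ε
      rw [pow_succ, Equiv.Perm.mul_apply]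
      have hx : (eta M cs i * eta M cs i') (t, ε) =
          ((p*q) * t * (q*p),
            ((if t = (q*p)^1 * q then (-1:ℤˣ) else 1) *
             (if t = (q*p)^0 * q then (-1:ℤˣ) else 1)) * ε) := by
        rw [Equiv.Perm.mul_apply, eta_apply, eta_apply]
        unfold etaFun
        simp only [pow_zero, pow_one, one_mul, Prod.mk.injEq]
        have hc2 : (q * t * q = p) ↔ (t = (q*p) * q) := by
          constructor
          · intro h
            have := congrArg (fun x => q * x * q) h
            rw [show q * (q * t * q) * q = (q*q)*t*(q*q) by group, cs.simple_mul_simple_self,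
              one_mul, mul_one] at this
            rw [this]
          · rintro rfl
            rw [show q * (q * p * q) * q = (q*q)*p*(q*q) by group, cs.simple_mul_simple_self,
              one_mul, mul_one]
        constructor
        · show p * (q * t * q) * p = (p*q) * t * (q*p)
          group
        · rw [if_congr hc2 rfl rfl, show (q*p)*q = q*p*q by group]
          split_ifs <;> simp <;> ring
      rw [hx, ih]
      simp only [Prod.mk.injEq]
      constructor
      · show (p*q)^k * ((p*q) * t * (q*p)) * (q*p)^k = (p*q)^(k+1) * t * (q*p)^(k+1)
        rw [pow_succ, pow_succ']
        simp only [mul_assoc]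
      · show (∏ a ∈ Finset.range (2*k), (if (p*q) * t * (q*p) = (q*p)^a * q then (-1:ℤˣ) else 1)) *
            (((if t = (q*p)^1 * q then (-1:ℤˣ) else 1) *
              (if t = (q*p)^0 * q then (-1:ℤˣ) else 1)) * ε) =
          (∏ a ∈ Finset.range (2*(k+1)), (if t = (q*p)^a * q then (-1:ℤˣ) else 1)) * ε
        have hprod : (∏ a ∈ Finset.range (2*(k+1)), (if t = (q*p)^a * q then (-1:ℤˣ) else 1)) =
            ((∏ a ∈ Finset.range (2*k), (if t = (q*p)^(a+2) * q then (-1:ℤˣ) else 1)) *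
              (if t = (q*p)^1 * q then (-1:ℤˣ) else 1)) *
              (if t = (q*p)^0 * q then (-1:ℤˣ) else 1) := by
          rw [show 2*(k+1) = (2*k+1)+1 by ring]
          rw [Finset.prod_range_succ' (fun a => (if t = (q*p)^a * q then (-1:ℤˣ) else 1)) (2*k+1)]
          rw [Finset.prod_range_succ' (fun a => (if t = (q*p)^(a+1) * q then (-1:ℤˣ) else 1)) (2*k)]
        rw [hprod]
        have hpt : ∀ a : ℕ, ((p*q) * t * (q*p) = (q*p)^a * q) ↔ (t = (q*p)^(a+2) * q) := by
          intro a
          rw [hconj, hshift]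
        have : (∏ a ∈ Finset.range (2*k), (if (p*q) * t * (q*p) = (q*p)^a * q then (-1:ℤˣ) else 1)) =
            (∏ a ∈ Finset.range (2*k), (if t = (q*p)^(a+2) * q then (-1:ℤˣ) else 1)) := by
          apply Finset.prod_congr rfl
          intro a _
          rw [if_congr (hpt a) rfl rfl]
        rw [this]
        simp only [mul_assoc]
  -- now conclude
  apply Equiv.ext
  rintro ⟨t, ε⟩
  rw [key (M.M i i') t ε]
  have h1 : (p*q)^(M.M i i') = 1 := cs.simple_mul_simple_pow i i'
  have h2 : (q*p)^(M.M i i') = 1 := cs.simple_mul_simple_pow' i i'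
  have hsgn : (∏ a ∈ Finset.range (2*(M.M i i')), (if t = (q*p)^a * q then (-1:ℤˣ) else 1)) = 1 := by
    rw [two_mul, Finset.prod_range_add]
    have : ∀ a : ℕ, (if t = (q*p)^(M.M i i' + a) * q then (-1:ℤˣ) else 1) =
        (if t = (q*p)^a * q then (-1:ℤˣ) else 1) := by
      intro a
      rw [pow_add, h2, one_mul]
    rw [Finset.prod_congr rfl (fun a _ => this a)]
    exact Int.units_mul_self _
  rw [h1, h2, hsgn]
  simp

/-- the sign representation -/
noncomputable def phi : W →* Equiv.Perm (W × ℤˣ) := cs.lift ⟨eta M cs, eta_liftable M cs⟩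

open Classical in
/-- sign of `t` against a list of reflections -/
noncomputable def sgn (l : List W) (t : W) : ℤˣ :=
  (l.map (fun r => if t = r then (-1:ℤˣ) else 1)).prod

open Classical in
lemma sgn_cons (r : W) (l : List W) (t : W) :
    sgn (r :: l) t = (if t = r then (-1:ℤˣ) else 1) * sgn l t := by
  unfold sgn
  rw [List.map_cons, List.prod_cons]

lemma sgn_nil (t : W) : sgn [] t = 1 := rfl

lemma sgn_eq_one_of_not_mem {l : List W} {t : W} (h : t ∉ l) : sgn l t = 1 := by
  induction l with
  | nil => rfl
  | cons r l ih =>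
    rw [sgn_cons, if_neg (fun hh => h (by rw [hh]; exact List.mem_cons_self)),
      ih (fun hh => h (List.mem_cons_of_mem r hh)), one_mul]

lemma phi_wordProd (ω : List B) (t : W) (ε : ℤˣ) :
    phi M cs (ππ ω) (t, ε) = (ππ ω * t * (ππ ω)⁻¹, sgn (cs.rightInvSeq ω) t * ε) := by
  induction ω generalizing t ε with
  | nil => simp [phi, cs.wordProd_nil, sgn_nil]
  | cons i ω ih =>
    rw [cs.wordProd_cons, map_mul, Equiv.Perm.mul_apply, ih]
    have hsimple : phi M cs (ss i) = eta M cs i := cs.lift_apply_simple (eta_liftable M cs) i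
    rw [hsimple, eta_apply]
    unfold etaFun
    simp only
    have hris : cs.rightInvSeq (i :: ω) = ((ππ ω)⁻¹ * ss i * ππ ω) :: cs.rightInvSeq ω := rfl
    rw [hris, sgn_cons]
    have hcond : (ππ ω * t * (ππ ω)⁻¹ = ss i) ↔ (t = (ππ ω)⁻¹ * ss i * ππ ω) := by
      constructor
      · rintro h
        rw [← h]; group
      · rintro rfl; group
    have hfst : ss i * (ππ ω * t * (ππ ω)⁻¹) * ss i = (ss i * ππ ω) * t * (ss i * ππ ω)⁻¹ := by
      rw [mul_inv_rev, cs.inv_simple]; group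
    by_cases hc : ππ ω * t * (ππ ω)⁻¹ = ss i
    · rw [if_pos hc, if_pos (hcond.mp hc)]
      simp only [Prod.mk.injEq]
      refine ⟨hfst, by simp⟩
    · rw [if_neg hc, if_neg (fun hh => hc (hcond.mpr hh))]
      simp only [Prod.mk.injEq]
      refine ⟨hfst, by simp⟩

lemma phi_simple_self (j : B) (ε : ℤˣ) : phi M cs (ss j) (ss j, ε) = (ss j, -ε) := by
  have hsimple : phi M cs (ss j) = eta M cs j := cs.lift_apply_simple (eta_liftable M cs) j
  rw [hsimple, eta_apply]
  unfold etaFun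
  rw [if_pos rfl]
  have h1 : (ss j * ss j * ss j : W) = ss j := by
    rw [cs.simple_mul_simple_self, one_mul]
  exact Prod.ext h1 rfl

theorem strong_exchange_simple {ω : List B} (hred : cs.IsReduced ω) {j : B}
    (hlt : ℓℓ (ππ ω * ss j) < ℓℓ (ππ ω)) : ss j ∈ cs.rightInvSeq ω := by
  by_contra hmem
  obtain ⟨β, hβred, hβ⟩ := cs.exists_reduced_word' (ππ ω * ss j)
  have hw : ππ ω = ππ β * ss j := by
    rw [← hβ, cs.simple_mul_simple_cancel_right]
  have hA : phi M cs (ππ ω) (ss j, 1) =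
      (ππ ω * ss j * (ππ ω)⁻¹, sgn (cs.rightInvSeq ω) (ss j) * 1) := phi_wordProd M cs ω _ _
  have hB : phi M cs (ππ ω) (ss j, 1) =
      (ππ β * ss j * (ππ β)⁻¹, sgn (cs.rightInvSeq β) (ss j) * (-1)) := by
    rw [hw, map_mul, Equiv.Perm.mul_apply, phi_simple_self, phi_wordProd]
  have hsω : sgn (cs.rightInvSeq ω) (ss j) = 1 := sgn_eq_one_of_not_mem hmem
  have hsβ : sgn (cs.rightInvSeq β) (ss j) = 1 := by
    apply sgn_eq_one_of_not_mem
    intro hmemβ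
    have h2 := (cs.isRightInversion_of_mem_rightInvSeq hβred hmemβ).2
    rw [← hβ, cs.simple_mul_simple_cancel_right] at h2
    omega
  rw [hA, hsω] at hB
  have := congrArg Prod.snd hB
  rw [hsβ] at this
  simp at this

theorem lifting {u : W} {i j : B}
    (h1 : ℓℓ (ss i * u) = ℓℓ u + 1) (h2 : ℓℓ (u * ss j) = ℓℓ u + 1)
    (h3 : ℓℓ (ss i * u * ss j) < ℓℓ (ss i * u)) : ss i * u = u * ss j := by
  obtain ⟨ωu, hredu, hu⟩ := cs.exists_reduced_word' u
  have hred : cs.IsReduced (i :: ωu) := by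
    show ℓℓ (ππ (i :: ωu)) = (i :: ωu).length
    rw [cs.wordProd_cons, ← hu, h1, List.length_cons]
    rw [hu] at h1 ⊢
    rw [hredu]
  have hmem : ss j ∈ cs.rightInvSeq (i :: ωu) := by
    apply strong_exchange_simple M cs hred
    rw [cs.wordProd_cons, ← hu]
    exact h3
  rw [show cs.rightInvSeq (i :: ωu) = ((ππ ωu)⁻¹ * ss i * ππ ωu) :: cs.rightInvSeq ωu from rfl]
    at hmem
  rcases List.mem_cons.mp hmem with h | h
  · rw [← hu] at h
    calc ss i * u = u * (u⁻¹ * ss i * u) := by group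
    _ = u * ss j := by rw [← h]
  · exfalso
    have h4 := (cs.isRightInversion_of_mem_rightInvSeq hredu h).2
    rw [← hu] at h4
    omega

end SE


section ListAux

variable {α : Type*}

lemma take_set_of_le' (l : List α) (m j : ℕ) (x : α) (h : j ≤ m) :
    (l.set m x).take j = l.take j := by
  apply List.ext_getElem?
  intro k
  rw [List.getElem?_take, List.getElem?_take]
  split
  · next hk => rw [List.getElem?_set, if_neg (by omega)]
  · rfl

lemma set_take_comm' (l : List α) (m j : ℕ) (x : α) (h : m < j) :
    (l.take j).set m x = (l.set m x).take j := by
  apply List.ext_getElem?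
  intro k
  by_cases hk : m = k
  · subst hk
    have hL : ((l.take j).set m x)[m]? = if m < (l.take j).length then some x else none := by
      rw [List.getElem?_set, if_pos rfl]
    have hR : ((l.set m x).take j)[m]? = if m < l.length then some x else none := by
      rw [List.getElem?_take, if_pos h, List.getElem?_set, if_pos rfl]
    rw [hL, hR, List.length_take]
    by_cases hml : m < l.length
    · rw [if_pos (by omega), if_pos hml]
    · rw [if_neg (by omega), if_neg hml]
  · have hL : ((l.take j).set m x)[k]? = (l.take j)[k]? := by
      rw [List.getElem?_set, if_neg hk]
    have hR : ((l.set m x).take j)[k]? = if k < j then l[k]? else none := by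
      rw [List.getElem?_take]
      split
      · rw [List.getElem?_set, if_neg hk]
      · rfl
    rw [hL, hR, List.getElem?_take]

lemma drop_set_of_lt' (l : List α) (m j : ℕ) (x : α) (h : m < j) :
    (l.set m x).drop j = l.drop j := by
  apply List.ext_getElem?
  intro k
  rw [List.getElem?_drop, List.getElem?_drop, List.getElem?_set, if_neg (by omega)]

end ListAux

section MaskAux

variable (M : CoxeterMatrix B) (cs : CoxeterSystem M W)

lemma maskProd_nil : maskProd M cs [] [] = 1 := by
  simp [maskProd, cs.wordProd_nil]

lemma maskProd_cons_true (i : B) (ω : List B) (σ : List Bool) :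
    maskProd M cs (i :: ω) (true :: σ) = cs.simple i * maskProd M cs ω σ := by
  unfold maskProd
  rw [List.zip_cons_cons, List.filter_cons_of_pos (by rfl), List.map_cons, cs.wordProd_cons]

lemma maskProd_cons_false (i : B) (ω : List B) (σ : List Bool) :
    maskProd M cs (i :: ω) (false :: σ) = maskProd M cs ω σ := by
  unfold maskProd
  rw [List.zip_cons_cons, List.filter_cons_of_neg (by simp)]

lemma maskProd_cons (i : B) (b : Bool) (ω : List B) (σ : List Bool) :
    maskProd M cs (i :: ω) (b :: σ) = maskProd M cs [i] [b] * maskProd M cs ω σ := by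
  cases b
  · rw [maskProd_cons_false, maskProd_cons_false]
    rw [maskProd_nil, one_mul]
  · rw [maskProd_cons_true, maskProd_cons_true]
    rw [maskProd_nil, mul_one]

lemma maskProd_singleton_true (i : B) : maskProd M cs [i] [true] = cs.simple i := by
  rw [maskProd_cons_true, maskProd_nil, mul_one]

lemma maskProd_singleton_false (i : B) : maskProd M cs [i] [false] = 1 := by
  rw [maskProd_cons_false, maskProd_nil]

lemma maskProd_append (ω₁ ω₂ : List B) (σ₁ σ₂ : List Bool) (h : ω₁.length = σ₁.length) :
    maskProd M cs (ω₁ ++ ω₂) (σ₁ ++ σ₂) = maskProd M cs ω₁ σ₁ * maskProd M cs ω₂ σ₂ := by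
  unfold maskProd
  rw [List.zip_append h, List.filter_append, List.map_append, cs.wordProd_append]

lemma maskProdTake_zero (ω : List B) (σ : List Bool) : maskProdTake M cs ω σ 0 = 1 := by
  simp [maskProdTake, maskProd, cs.wordProd_nil]

lemma maskProdTake_append_le (ω₁ ω₂ : List B) (σ₁ σ₂ : List Bool) (j : ℕ)
    (hj : j ≤ ω₁.length) (hj' : j ≤ σ₁.length) :
    maskProdTake M cs (ω₁ ++ ω₂) (σ₁ ++ σ₂) j = maskProdTake M cs ω₁ σ₁ j := by
  unfold maskProdTake
  rw [List.take_append_of_le_length hj, List.take_append_of_le_length hj']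

lemma maskProdTake_cons_succ (i : B) (b : Bool) (ω : List B) (σ : List Bool) (j : ℕ) :
    maskProdTake M cs (i :: ω) (b :: σ) (j + 1)
      = maskProd M cs [i] [b] * maskProdTake M cs ω σ j := by
  unfold maskProdTake
  rw [List.take_succ_cons, List.take_succ_cons, maskProd_cons]

lemma maskProdTake_succ (ω : List B) (σ : List Bool) (j : ℕ)
    (hj : j < ω.length) (hj' : j < σ.length) :
    maskProdTake M cs ω σ (j + 1)
      = maskProdTake M cs ω σ j * maskProd M cs [ω[j]] [σ[j]] := by
  unfold maskProdTake
  rw [List.take_succ, List.take_succ, List.getElem?_eq_getElem hj, List.getElem?_eq_getElem hj']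
  simp only [Option.toList_some]
  rw [maskProd_append M cs _ _ _ _ (by simp [hj.le, hj'.le])]

lemma maskProd_split (ω : List B) (σ : List Bool) (m : ℕ)
    (hm : m < ω.length) (hmσ : m < σ.length) :
    maskProd M cs ω σ = maskProdTake M cs ω σ m * maskProd M cs [ω[m]] [σ[m]]
      * maskProd M cs (ω.drop (m+1)) (σ.drop (m+1)) := by
  conv_lhs => rw [← List.take_append_drop m ω, ← List.take_append_drop m σ]
  rw [maskProd_append M cs _ _ _ _ (by simp [hm.le, hmσ.le])]
  rw [List.drop_eq_getElem_cons hm, List.drop_eq_getElem_cons hmσ, maskProd_cons]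
  rw [maskProdTake, mul_assoc]

end MaskAux

section Cases

variable (M : CoxeterMatrix B) (cs : CoxeterSystem M W)

lemma raise_defect (k x : B) (u : W)
    (hup : cs.length (cs.simple k * u) = cs.length u + 1)
    (hd : cs.length (u * cs.simple x) < cs.length u) :
    cs.length ((cs.simple k * u) * cs.simple x) < cs.length (cs.simple k * u) := by
  have h1 : cs.length (cs.simple k * (u * cs.simple x))
      ≤ 1 + cs.length (u * cs.simple x) := by
    have := cs.length_mul_le (cs.simple k) (u * cs.simple x)
    rwa [cs.length_simple] at this
  rw [mul_assoc]
  omega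

lemma card_succ_le {α β : Type*} [DecidableEq β] (s : Finset α) (t : Finset β) (x : β)
    (f : α → β) (hx : x ∈ t) (hmaps : ∀ a ∈ s, f a ∈ t) (hne : ∀ a ∈ s, f a ≠ x)
    (hinj : Set.InjOn f s) : s.card + 1 ≤ t.card := by
  have h1 : s.card ≤ (t.erase x).card :=
    Finset.card_le_card_of_injOn f (fun a ha => Finset.mem_erase.mpr ⟨hne a ha, hmaps a ha⟩) hinj
  have h2 := Finset.card_erase_add_one hx
  omega

lemma isDefect_iff (ω : List B) (σ : List Bool) (j : ℕ) (hj : j < ω.length) :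
    IsDefect M cs ω σ ⟨j, hj⟩ ↔
      cs.length (maskProdTake M cs ω σ j * cs.simple (ω[j])) <
        cs.length (maskProdTake M cs ω σ j) := by
  unfold IsDefect
  simp only [List.get_eq_getElem]

theorem right_case {y : W} (k : B) (ω : List B) (σ : List Bool)
    (hred : cs.IsReduced ω) (hprod : cs.wordProd ω = y)
    (hσlen : σ.length = ω.length) (hσfalse : false ∈ σ)
    (hcount : plainZeros M cs ω σ ≤ zeroDefects M cs ω σ)
    (hlw : cs.length (y * cs.simple k) = cs.length y + 1) :
    ∃ (ω' : List B) (σ' : List Bool), cs.IsReduced ω' ∧ cs.wordProd ω' = y * cs.simple k ∧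
      ProperMask ω' σ' ∧ plainZeros M cs ω' σ' ≤ zeroDefects M cs ω' σ' := by
  have hyn : cs.length y = ω.length := by rw [← hprod]; exact hred
  have hn : 0 < ω.length := by
    have : 0 < σ.length := List.length_pos_iff.mpr (List.ne_nil_of_mem hσfalse)
    omega
  have hprod' : cs.wordProd (ω ++ [k]) = y * cs.simple k := by
    rw [cs.wordProd_append, hprod, cs.wordProd_singleton]
  have hred' : cs.IsReduced (ω ++ [k]) := by
    show cs.length (cs.wordProd (ω ++ [k])) = (ω ++ [k]).length
    rw [hprod', hlw, hyn]
    simp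
  -- bit facts
  have hbit : ∀ j : ℕ, j < ω.length → (σ ++ [true]).getD j true = σ.getD j true := by
    intro j hj
    rw [List.getD_eq_getElem?_getD, List.getD_eq_getElem?_getD,
      List.getElem?_append_left (by omega)]
  have hbitn : (σ ++ [true]).getD ω.length true = true := by
    rw [List.getD_eq_getElem?_getD, List.getElem?_append_right (by omega), hσlen]
    simp
  -- defect transfer
  have hdef : ∀ (j : ℕ) (hj : j < ω.length) (hj' : j < (ω ++ [k]).length),
      (IsDefect M cs (ω ++ [k]) (σ ++ [true]) ⟨j, hj'⟩ ↔ IsDefect M cs ω σ ⟨j, hj⟩) := by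
    intro j hj hj'
    unfold IsDefect
    simp only [List.get_eq_getElem]
    rw [maskProdTake_append_le M cs _ _ _ _ j (by omega) (by omega),
      List.getElem_append_left hj]
  have hzd : zeroDefects M cs ω σ ≤ zeroDefects M cs (ω ++ [k]) (σ ++ [true]) := by
    classical
    apply Finset.card_le_card_of_injOn
      (fun j : Fin ω.length => (⟨j.1, by simp⟩ : Fin (ω ++ [k]).length))
    · intro j hj
      rw [Finset.mem_coe, Finset.mem_filter] at hj ⊢
      refine ⟨Finset.mem_univ _, ?_, ?_⟩
      · show (σ ++ [true]).getD j.1 true = false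
        rw [hbit j.1 j.2]
        exact hj.2.1
      · exact (hdef j.1 j.2 _).mpr hj.2.2
    · intro a _ b _ hab
      apply Fin.ext
      simpa using hab
  have hpz : plainZeros M cs (ω ++ [k]) (σ ++ [true]) ≤ plainZeros M cs ω σ := by
    classical
    apply Finset.card_le_card_of_injOn
      (fun j' : Fin (ω ++ [k]).length =>
        if h : j'.1 < ω.length then (⟨j'.1, h⟩ : Fin ω.length) else ⟨0, hn⟩)
    · intro j' hj'
      rw [Finset.mem_coe, Finset.mem_filter] at hj'
      obtain ⟨-, hb, hnd⟩ := hj'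
      have hjn : j'.1 < ω.length := by
        by_contra hge
        have hj2 := j'.2
        simp only [List.length_append, List.length_singleton] at hj2
        have : j'.1 = ω.length := by omega
        rw [show ((j' : ℕ) = ω.length) from this, hbitn] at hb
        exact absurd hb (by simp)
      simp only [dif_pos hjn]
      rw [Finset.mem_coe, Finset.mem_filter]
      refine ⟨Finset.mem_univ _, ?_, ?_⟩
      · show σ.getD j'.1 true = false
        rw [← hbit j'.1 hjn]
        exact hb
      · intro hd
        exact hnd ((hdef j'.1 hjn j'.2).mpr hd)
    · intro a ha b hb hab
      rw [Finset.mem_coe, Finset.mem_filter] at ha hb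
      have han : a.1 < ω.length := by
        by_contra hge
        have ha2 := a.2
        simp only [List.length_append, List.length_singleton] at ha2
        have : a.1 = ω.length := by omega
        rw [show ((a : ℕ) = ω.length) from this, hbitn] at ha
        exact absurd ha.2.1 (by simp)
      have hbn : b.1 < ω.length := by
        by_contra hge
        have hb2 := b.2
        simp only [List.length_append, List.length_singleton] at hb2
        have : b.1 = ω.length := by omega
        rw [show ((b : ℕ) = ω.length) from this, hbitn] at hb
        exact absurd hb.2.1 (by simp)
      simp only [dif_pos han, dif_pos hbn] at hab
      apply Fin.ext
      simpa using hab
  refine ⟨ω ++ [k], σ ++ [true], hred', hprod', ⟨by simp [hσlen], List.mem_append_left _ hσfalse⟩, ?_⟩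
  omega

theorem left_case {y : W} (k : B) (ω : List B) (σ : List Bool)
    (hred : cs.IsReduced ω) (hprod : cs.wordProd ω = y)
    (hσlen : σ.length = ω.length) (hσfalse : false ∈ σ)
    (hcount : plainZeros M cs ω σ ≤ zeroDefects M cs ω σ)
    (hlw : cs.length (cs.simple k * y) = cs.length y + 1) :
    ∃ (ω' : List B) (σ' : List Bool), cs.IsReduced ω' ∧ cs.wordProd ω' = cs.simple k * y ∧
      ProperMask ω' σ' ∧ plainZeros M cs ω' σ' ≤ zeroDefects M cs ω' σ' := by
  classical
  have hyn : cs.length y = ω.length := by rw [← hprod]; exact hred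
  have hn : 0 < ω.length := by
    have : 0 < σ.length := List.length_pos_iff.mpr (List.ne_nil_of_mem hσfalse)
    omega
  have hprod' : cs.wordProd (k :: ω) = cs.simple k * y := by
    rw [cs.wordProd_cons, hprod]
  have hred' : cs.IsReduced (k :: ω) := by
    show cs.length (cs.wordProd (k :: ω)) = (k :: ω).length
    rw [hprod', hlw, hyn, List.length_cons]
  by_cases hcross : ∀ j, j < ω.length →
      cs.length (cs.simple k * maskProdTake M cs ω σ j) = cs.length (maskProdTake M cs ω σ j) + 1
  · -- Subcase A : no crossing; use mask true :: σ
    have hpreA : ∀ j : ℕ, maskProdTake M cs (k::ω) (true::σ) (j+1)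
        = cs.simple k * maskProdTake M cs ω σ j := by
      intro j
      rw [maskProdTake_cons_succ, maskProd_singleton_true]
    have hdefA : ∀ (j : ℕ) (hj : j < ω.length) (j' : Fin (k::ω).length), j'.1 = j + 1 →
        IsDefect M cs ω σ ⟨j, hj⟩ → IsDefect M cs (k::ω) (true::σ) j' := by
      intro j hj j' hv hd
      obtain ⟨jv, hjlt⟩ := j'
      have hv' : jv = j + 1 := hv
      subst hv'
      rw [isDefect_iff] at hd ⊢
      rw [List.getElem_cons_succ, hpreA j]
      exact raise_defect M cs k _ _ (hcross j hj) hd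
    have hzdA : zeroDefects M cs ω σ ≤ zeroDefects M cs (k::ω) (true::σ) := by
      apply Finset.card_le_card_of_injOn
        (fun j : Fin ω.length => (⟨j.1+1, by have := j.2; simp only [List.length_cons]; omega⟩ : Fin (k::ω).length))
      · intro j hj
        rw [Finset.mem_coe, Finset.mem_filter] at hj ⊢
        refine ⟨Finset.mem_univ _, ?_, hdefA j.1 j.2 _ rfl hj.2.2⟩
        show (true::σ).getD (j.1+1) true = false
        rw [List.getD_cons_succ]
        exact hj.2.1
      · intro a _ b _ hab
        apply Fin.ext
        have := congrArg Fin.val hab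
        simpa using this
    have hpzA : plainZeros M cs (k::ω) (true::σ) ≤ plainZeros M cs ω σ := by
      apply Finset.card_le_card_of_injOn
        (fun j' : Fin (k::ω).length =>
          if h : j'.1 - 1 < ω.length then (⟨j'.1-1, h⟩ : Fin ω.length) else ⟨0, hn⟩)
      · intro j' hj'
        rw [Finset.mem_coe, Finset.mem_filter] at hj'
        obtain ⟨-, hb, hnd⟩ := hj'
        have hj0 : j'.1 ≠ 0 := by
          intro h0
          rw [show ((j' : ℕ) = 0) from h0, List.getD_cons_zero] at hb
          exact absurd hb (by simp)
        have hlt : j'.1 - 1 < ω.length := by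
          have := j'.2
          simp only [List.length_cons] at this
          omega
        have hv : (j' : ℕ) = (j'.1 - 1) + 1 := by omega
        simp only [dif_pos hlt]
        rw [Finset.mem_coe, Finset.mem_filter]
        refine ⟨Finset.mem_univ _, ?_, ?_⟩
        · show σ.getD (j'.1-1) true = false
          rw [hv, List.getD_cons_succ] at hb
          exact hb
        · intro hd
          exact hnd (hdefA (j'.1-1) hlt j' hv hd)
      · intro a ha b hb hab
        rw [Finset.mem_coe, Finset.mem_filter] at ha hb
        have ha0 : a.1 ≠ 0 := by
          intro h0
          have := ha.2.1
          rw [show ((a : ℕ) = 0) from h0, List.getD_cons_zero] at this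
          exact absurd this (by simp)
        have hb0 : b.1 ≠ 0 := by
          intro h0
          have := hb.2.1
          rw [show ((b : ℕ) = 0) from h0, List.getD_cons_zero] at this
          exact absurd this (by simp)
        have hal : a.1 - 1 < ω.length := by have := a.2; simp only [List.length_cons] at this; omega
        have hbl : b.1 - 1 < ω.length := by have := b.2; simp only [List.length_cons] at this; omega
        simp only [dif_pos hal, dif_pos hbl] at hab
        have := congrArg Fin.val hab
        simp only at this
        apply Fin.ext
        omega
    exact ⟨k :: ω, true :: σ, hred', hprod',
      ⟨by simp [hσlen], List.mem_cons_of_mem _ hσfalse⟩, by omega⟩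
  · -- Subcase B : crossing
    push_neg at hcross
    have hex : ∃ j, j < ω.length ∧
        cs.length (cs.simple k * maskProdTake M cs ω σ j)
          ≠ cs.length (maskProdTake M cs ω σ j) + 1 := hcross
    set Q := fun j => j < ω.length ∧
        cs.length (cs.simple k * maskProdTake M cs ω σ j)
          ≠ cs.length (maskProdTake M cs ω σ j) + 1 with hQ
    have hexQ : ∃ j, Q j := hex
    let j₀ := Nat.find hexQ
    have hj₀ : Q j₀ := Nat.find_spec hexQ
    have hminQ : ∀ j, j < j₀ → ¬ Q j := fun j hj => Nat.find_min hexQ hj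
    have hdrop : cs.length (cs.simple k * maskProdTake M cs ω σ j₀) + 1
        = cs.length (maskProdTake M cs ω σ j₀) := by
      rcases cs.length_simple_mul (maskProdTake M cs ω σ j₀) k with h | h
      · exact absurd h hj₀.2
      · exact h
    have hj₀0 : j₀ ≠ 0 := by
      intro h0
      rw [h0, maskProdTake_zero] at hdrop
      rw [mul_one, cs.length_simple, cs.length_one] at hdrop
      omega
    obtain ⟨m, hm⟩ : ∃ m, j₀ = m + 1 := ⟨j₀ - 1, by omega⟩
    have hmlt : m < ω.length := by
      have h := hj₀.1
      rw [hm] at h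
      omega
    have hmσ : m < σ.length := by omega
    have hup : ∀ j, j ≤ m → cs.length (cs.simple k * maskProdTake M cs ω σ j)
        = cs.length (maskProdTake M cs ω σ j) + 1 := by
      intro j hj
      have hnQ := hminQ j (by omega)
      rcases cs.length_simple_mul (maskProdTake M cs ω σ j) k with h | h
      · exact h
      · exfalso
        exact hnQ ⟨by omega, by omega⟩
    have hbitm : σ[m] = true := by
      by_contra hb
      have hbf : σ[m] = false := by
        cases hσm : σ[m]
        · rfl
        · exact absurd hσm hb
      have hPstep := maskProdTake_succ M cs ω σ m hmlt hmσ
      rw [hbf, maskProd_singleton_false, mul_one] at hPstep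
      rw [hm, hPstep] at hdrop
      have := hup m le_rfl
      omega
    have hstep : maskProdTake M cs ω σ (m+1)
        = maskProdTake M cs ω σ m * cs.simple (ω[m]'hmlt) := by
      rw [maskProdTake_succ M cs ω σ m hmlt hmσ, hbitm, maskProd_singleton_true]
    have d1 := hup m le_rfl
    have hA2 : cs.length (cs.simple k * (maskProdTake M cs ω σ m * cs.simple (ω[m]'hmlt))) + 1
        = cs.length (maskProdTake M cs ω σ m * cs.simple (ω[m]'hmlt)) := by
      rw [← hstep, ← hm]
      exact hdrop
    have e1 := cs.length_mul_simple (cs.simple k * maskProdTake M cs ω σ m) (ω[m]'hmlt)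
    rw [mul_assoc] at e1
    have hd2 : cs.length (maskProdTake M cs ω σ m * cs.simple (ω[m]'hmlt))
        = cs.length (maskProdTake M cs ω σ m) + 1 := by
      rcases cs.length_mul_simple (maskProdTake M cs ω σ m) (ω[m]'hmlt) with h | h
      · exact h
      · exfalso
        rcases e1 with e | e <;> omega
    have hd3 : cs.length (cs.simple k * maskProdTake M cs ω σ m * cs.simple (ω[m]'hmlt))
        < cs.length (cs.simple k * maskProdTake M cs ω σ m) := by
      rw [mul_assoc]
      omega
    have hkey : cs.simple k * maskProdTake M cs ω σ m
        = maskProdTake M cs ω σ m * cs.simple (ω[m]'hmlt) :=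
      SE.lifting M cs d1 hd2 hd3
    -- the new mask
    set σ'' := σ.set m false with hσ''
    have hσ''len : σ''.length = σ.length := by rw [hσ'']; exact List.length_set
    have hmσ'' : m < σ''.length := by rw [hσ''len]; omega
    have hfalse'' : false ∈ σ'' := by
      have h1 : σ''[m]'hmσ'' = false := List.getElem_set_self (by simp only [List.length_set]; omega)
      rw [← h1]
      exact List.getElem_mem _
    -- bits
    have hbit_ne : ∀ j : ℕ, j ≠ m → σ''.getD j true = σ.getD j true := by
      intro j hj
      rw [List.getD_eq_getElem?_getD, List.getD_eq_getElem?_getD, hσ'',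
        List.getElem?_set, if_neg (fun h => hj h.symm)]
    have hbit_m : σ''.getD m true = false := by
      rw [List.getD_eq_getElem?_getD, hσ'', List.getElem?_set, if_pos rfl, if_pos (by omega)]
      rfl
    have hbitm' : σ.getD m true = true := by
      rw [List.getD_eq_getElem σ true (by omega : m < σ.length)]
      exact hbitm
    -- prefixes
    have hpre : ∀ j : ℕ, maskProdTake M cs (k::ω) (true::σ'') (j+1)
        = cs.simple k * maskProdTake M cs ω σ'' j := by
      intro j
      rw [maskProdTake_cons_succ, maskProd_singleton_true]
    have hpre_le : ∀ j : ℕ, j ≤ m → maskProdTake M cs ω σ'' j = maskProdTake M cs ω σ j := by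
      intro j hj
      show maskProd M cs (ω.take j) (σ''.take j) = maskProd M cs (ω.take j) (σ.take j)
      rw [hσ'', take_set_of_le' σ m j false hj]
    have hpre_gt : ∀ j : ℕ, m < j → j ≤ ω.length →
        cs.simple k * maskProdTake M cs ω σ'' j = maskProdTake M cs ω σ j := by
      intro j hmj hjn
      have hAl : m < (ω.take j).length := by
        rw [List.length_take]
        omega
      have hSl : m < (σ.take j).length := by
        rw [List.length_take]
        omega
      have htakeA : (ω.take j).take m = ω.take m := by rw [List.take_take]; congr 1; omega
      have htakeS : (σ.take j).take m = σ.take m := by rw [List.take_take]; congr 1; omega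
      have h1 : maskProdTake M cs ω σ'' j
          = maskProd M cs (ω.take j) ((σ.take j).set m false) := by
        show maskProd M cs (ω.take j) (σ''.take j) = _
        rw [hσ'', ← set_take_comm' σ m j false hmj]
      have h2 : maskProd M cs (ω.take j) ((σ.take j).set m false)
          = maskProdTake M cs ω σ m
            * maskProd M cs ((ω.take j).drop (m+1)) ((σ.take j).drop (m+1)) := by
        rw [maskProd_split M cs (ω.take j) ((σ.take j).set m false) m hAl
          (by rw [List.length_set]; exact hSl)]
        rw [List.getElem_set_self (by rw [List.length_set] at *; exact hSl)]
        rw [maskProd_singleton_false, mul_one]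
        rw [drop_set_of_lt' _ _ _ _ (by omega)]
        congr 1
        show maskProd M cs ((ω.take j).take m) (((σ.take j).set m false).take m) = _
        rw [take_set_of_le' _ _ _ _ le_rfl, htakeA, htakeS]
        rfl
      have h3 : maskProdTake M cs ω σ j
          = maskProdTake M cs ω σ m * cs.simple (ω[m]'hmlt)
            * maskProd M cs ((ω.take j).drop (m+1)) ((σ.take j).drop (m+1)) := by
        show maskProd M cs (ω.take j) (σ.take j) = _
        rw [maskProd_split M cs (ω.take j) (σ.take j) m hAl hSl]
        congr 2
        · show maskProd M cs ((ω.take j).take m) ((σ.take j).take m) = _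
          rw [htakeA, htakeS]
          rfl
        · rw [List.getElem_take, List.getElem_take, hbitm, maskProd_singleton_true]
      rw [h1, h2, h3, ← mul_assoc, hkey]
    -- statuses
    have hdef_lt : ∀ (j : ℕ) (hj : j < ω.length), j < m →
        ∀ (j' : Fin (k::ω).length), j'.1 = j + 1 →
        IsDefect M cs ω σ ⟨j, hj⟩ → IsDefect M cs (k::ω) (true::σ'') j' := by
      intro j hj hjm j' hv hd
      obtain ⟨jv, hjlt⟩ := j'
      have hv' : jv = j + 1 := hv
      subst hv'
      rw [isDefect_iff] at hd ⊢
      rw [List.getElem_cons_succ, hpre j, hpre_le j (by omega)]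
      exact raise_defect M cs k _ _ (hup j (by omega)) hd
    have hdef_gt : ∀ (j : ℕ) (hj : j < ω.length), m < j →
        ∀ (j' : Fin (k::ω).length), j'.1 = j + 1 →
        (IsDefect M cs (k::ω) (true::σ'') j' ↔ IsDefect M cs ω σ ⟨j, hj⟩) := by
      intro j hj hjm j' hv
      obtain ⟨jv, hjlt⟩ := j'
      have hv' : jv = j + 1 := hv
      subst hv'
      rw [isDefect_iff, isDefect_iff]
      rw [List.getElem_cons_succ, hpre j, hpre_gt j hjm (by omega)]
    have hdef_m : ∀ (j' : Fin (k::ω).length), j'.1 = m + 1 →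
        IsDefect M cs (k::ω) (true::σ'') j' := by
      intro j' hv
      obtain ⟨jv, hjlt⟩ := j'
      have hv' : jv = m + 1 := hv
      subst hv'
      rw [isDefect_iff]
      rw [List.getElem_cons_succ, hpre m, hpre_le m le_rfl, hkey,
        cs.simple_mul_simple_cancel_right, ← hkey]
      omega
    -- counting: zeroDefects
    have hx_lt : m + 1 < (k::ω).length := by simp only [List.length_cons]; omega
    set x : Fin (k::ω).length := ⟨m+1, hx_lt⟩ with hxdef
    have hzdB : zeroDefects M cs ω σ + 1 ≤ zeroDefects M cs (k::ω) (true::σ'') := by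
      unfold zeroDefects
      apply card_succ_le _ _ x
        (fun j : Fin ω.length => (⟨j.1+1, by have := j.2; simp only [List.length_cons]; omega⟩ :
          Fin (k::ω).length))
      · rw [Finset.mem_filter]
        refine ⟨Finset.mem_univ _, ?_, hdef_m x rfl⟩
        show (true::σ'').getD (m+1) true = false
        rw [List.getD_cons_succ]
        exact hbit_m
      · intro j hj
        rw [Finset.mem_filter] at hj ⊢
        obtain ⟨-, hb, hd⟩ := hj
        have hjm : j.1 ≠ m := by
          intro h
          rw [h, hbitm'] at hb
          exact absurd hb (by simp)
        refine ⟨Finset.mem_univ _, ?_, ?_⟩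
        · show (true::σ'').getD (j.1+1) true = false
          rw [List.getD_cons_succ, hbit_ne j.1 hjm]
          exact hb
        · rcases lt_or_gt_of_ne hjm with hlt | hgt
          · exact hdef_lt j.1 j.2 hlt _ rfl hd
          · exact (hdef_gt j.1 j.2 hgt _ rfl).mpr hd
      · intro j hj
        rw [Finset.mem_filter] at hj
        have hjm : j.1 ≠ m := by
          intro h
          have hb := hj.2.1
          rw [h, hbitm'] at hb
          exact absurd hb (by simp)
        intro hfeq
        have := congrArg Fin.val hfeq
        simp only [hxdef] at this
        exact hjm (by omega)
      · intro a _ b _ hab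
        apply Fin.ext
        have := congrArg Fin.val hab
        simpa using this
    -- counting: plainZeros
    have hpzB : plainZeros M cs (k::ω) (true::σ'') ≤ plainZeros M cs ω σ := by
      apply Finset.card_le_card_of_injOn
        (fun j' : Fin (k::ω).length =>
          if h : j'.1 - 1 < ω.length then (⟨j'.1-1, h⟩ : Fin ω.length) else ⟨0, hn⟩)
      · intro j' hj'
        rw [Finset.mem_coe, Finset.mem_filter] at hj'
        obtain ⟨-, hb, hnd⟩ := hj'
        have hj0 : j'.1 ≠ 0 := by
          intro h0
          rw [show ((j' : ℕ) = 0) from h0, List.getD_cons_zero] at hb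
          exact absurd hb (by simp)
        have hlt : j'.1 - 1 < ω.length := by
          have := j'.2
          simp only [List.length_cons] at this
          omega
        have hv : (j' : ℕ) = (j'.1 - 1) + 1 := by omega
        have hjm : j'.1 - 1 ≠ m := by
          intro h
          exact hnd (hdef_m j' (by omega))
        simp only [dif_pos hlt]
        rw [Finset.mem_coe, Finset.mem_filter]
        refine ⟨Finset.mem_univ _, ?_, ?_⟩
        · show σ.getD (j'.1-1) true = false
          rw [hv, List.getD_cons_succ, hbit_ne _ hjm] at hb
          exact hb
        · intro hd
          rcases lt_or_gt_of_ne hjm with hlt2 | hgt2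
          · exact hnd (hdef_lt (j'.1-1) hlt hlt2 j' hv hd)
          · exact hnd ((hdef_gt (j'.1-1) hlt hgt2 j' hv).mpr hd)
      · intro a ha b hb hab
        rw [Finset.mem_coe, Finset.mem_filter] at ha hb
        have ha0 : a.1 ≠ 0 := by
          intro h0
          have := ha.2.1
          rw [show ((a : ℕ) = 0) from h0, List.getD_cons_zero] at this
          exact absurd this (by simp)
        have hb0 : b.1 ≠ 0 := by
          intro h0
          have := hb.2.1
          rw [show ((b : ℕ) = 0) from h0, List.getD_cons_zero] at this
          exact absurd this (by simp)
        have hal : a.1 - 1 < ω.length := by have := a.2; simp only [List.length_cons] at this; omega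
        have hbl : b.1 - 1 < ω.length := by have := b.2; simp only [List.length_cons] at this; omega
        simp only [dif_pos hal, dif_pos hbl] at hab
        have := congrArg Fin.val hab
        simp only at this
        apply Fin.ext
        omega
    refine ⟨k :: ω, true :: σ'', hred', hprod',
      ⟨by simp [hσ''len, hσlen], List.mem_cons_of_mem _ hfalse''⟩, ?_⟩
    have h1 := hpzB
    have h2 := hzdB
    have h3 := hcount
    omega

end Cases

/-- if `w` contains `y` as a factor with `l(w) = l(y) + 1` and some reduced
expression of `y` admits a proper mask with (# zero-defects) ≥ (# plain-zeros), then some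
reduced expression of `w` admits a proper mask with (# zero-defects) ≥ (# plain-zeros);
hence if `y` is not Deodhar then `w` is not Deodhar. -/
theorem not_deodhar_of_factor_succ {B W : Type*} [Group W] (M : CoxeterMatrix B)
    (cs : CoxeterSystem M W) (w y : W)
    (hfac : ContainsFactor M cs w y)
    (hlen : cs.length w = cs.length y + 1)
    (hy : ∃ (ω : List B) (σ : List Bool), cs.IsReduced ω ∧ cs.wordProd ω = y ∧
      ProperMask ω σ ∧ plainZeros M cs ω σ ≤ zeroDefects M cs ω σ) :
    (∃ (ω' : List B) (σ' : List Bool), cs.IsReduced ω' ∧ cs.wordProd ω' = w ∧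
      ProperMask ω' σ' ∧ plainZeros M cs ω' σ' ≤ zeroDefects M cs ω' σ') ∧
    (¬ IsDeodharElt M cs y → ¬ IsDeodharElt M cs w) := by
  obtain ⟨ω, σ, hred, hprod, ⟨hσlen, hσfalse⟩, hcount⟩ := hy
  obtain ⟨a, b, hab, hlab⟩ := hfac
  have hsum : cs.length a + cs.length b = 1 := by omega
  have hmain : ∃ (ω' : List B) (σ' : List Bool), cs.IsReduced ω' ∧ cs.wordProd ω' = w ∧
      ProperMask ω' σ' ∧ plainZeros M cs ω' σ' ≤ zeroDefects M cs ω' σ' := by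
    by_cases ha : cs.length a = 0
    · have hb1 : cs.length b = 1 := by omega
      have ha1 : a = 1 := cs.length_eq_zero_iff.mp ha
      obtain ⟨k, hk⟩ := cs.length_eq_one_iff.mp hb1
      have hw : w = y * cs.simple k := by rw [hab, ha1, hk, one_mul]
      have hlw : cs.length (y * cs.simple k) = cs.length y + 1 := by rw [← hw]; omega
      obtain ⟨ω', σ', h1, h2, h3, h4⟩ :=
        right_case M cs k ω σ hred hprod hσlen hσfalse hcount hlw
      exact ⟨ω', σ', h1, by rw [h2, hw], h3, h4⟩
    · have ha1 : cs.length a = 1 := by omega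
      have hb0 : cs.length b = 0 := by omega
      have hb1 : b = 1 := cs.length_eq_zero_iff.mp hb0
      obtain ⟨k, hk⟩ := cs.length_eq_one_iff.mp ha1
      have hw : w = cs.simple k * y := by rw [hab, hb1, hk, mul_one]
      have hlw : cs.length (cs.simple k * y) = cs.length y + 1 := by rw [← hw]; omega
      obtain ⟨ω', σ', h1, h2, h3, h4⟩ :=
        left_case M cs k ω σ hred hprod hσlen hσfalse hcount hlw
      exact ⟨ω', σ', h1, by rw [h2, hw], h3, h4⟩
  refine ⟨hmain, ?_⟩
  intro _ hDw
  obtain ⟨ω', σ', h1, h2, h3, h4⟩ := hmain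
  have := hDw ω' h1 h2 σ' h3
  omega

end Paper
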